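/- Let 𝒢=(G,λ) be a temporal graph of lifetime T, let ν = ν(G) be the maximum matching size of the underlying graph G, and let Δ, ℓ be natural numbers with ℓΔ ≤ T. Then there exists an ℓ-complete family ℳ of Δ-temporal matchings of 𝒢|_{[Δ(ℓ−1)+1, Δℓ]} with |ℳ| ≤ C(5νΔ, 5ν), the binomial coefficient of 5νΔ over 5ν. -/

import Mathlib

variable {V : Type*}

/-- The underlying (static) graph of a temporal graph given by its time-labeling. -/
def ugraph (lab : Sym2 V → Finset ℕ) : SimpleGraph V where
  Adj x y := x ≠ y ∧ (lab s(x, y)).Nonempty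
  symm := by
    constructor
    intro x y h
    exact ⟨h.1.symm, by rw [Sym2.eq_swap]; exact h.2⟩
  loopless := by constructor; intro x h; exact h.1 rfl

/-- `(e, t)` is a time edge of the temporal graph given by `lab`. -/
def IsTimeEdge (lab : Sym2 V → Finset ℕ) (p : Sym2 V × ℕ) : Prop :=
  ¬ p.1.IsDiag ∧ p.2 ∈ lab p.1

/-- Two time edges are Δ-independent: edges disjoint or labels at least Δ apart. -/
def DIndep (Δ : ℕ) (p q : Sym2 V × ℕ) : Prop :=
  (∀ v, v ∈ p.1 → v ∉ q.1) ∨ Δ ≤ ((p.2 : ℤ) - (q.2 : ℤ)).natAbs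

/-- A Δ-temporal matching. -/
def IsTM (lab : Sym2 V → Finset ℕ) (Δ : ℕ) (M : Finset (Sym2 V × ℕ)) : Prop :=
  (∀ p ∈ M, IsTimeEdge lab p) ∧ ∀ p ∈ M, ∀ q ∈ M, p ≠ q → DIndep Δ p q

/-- μ_Δ: maximum cardinality of a Δ-temporal matching. -/
noncomputable def tmu (lab : Sym2 V → Finset ℕ) (Δ : ℕ) : ℕ :=
  sSup {k | ∃ M : Finset (Sym2 V × ℕ), IsTM lab Δ M ∧ M.card = k}

/-- The temporal graph has lifetime `T`. -/
def HasLifetime (lab : Sym2 V → Finset ℕ) (T : ℕ) : Prop :=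
  (∀ e, ∀ t ∈ lab e, 1 ≤ t ∧ t ≤ T) ∧ ∃ e : Sym2 V, ¬ e.IsDiag ∧ T ∈ lab e

/-- The snapshot at time `t`. -/
def tsnapshot (lab : Sym2 V → Finset ℕ) (t : ℕ) : SimpleGraph V where
  Adj x y := x ≠ y ∧ t ∈ lab s(x, y)
  symm := by
    constructor
    intro x y h
    exact ⟨h.1.symm, by rw [Sym2.eq_swap]; exact h.2⟩
  loopless := by constructor; intro x h; exact h.1 rfl

/-- 𝒢|_S : keep only time edges with label in `S`. -/
def trestrict (lab : Sym2 V → Finset ℕ) (S : Finset ℕ) : Sym2 V → Finset ℕ :=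
  fun e => lab e ∩ S

/-- A finite matching of a static graph. -/
def IsMatchingF (G : SimpleGraph V) (R : Finset (Sym2 V)) : Prop :=
  (∀ e ∈ R, e ∈ G.edgeSet) ∧ ∀ e ∈ R, ∀ e' ∈ R, e ≠ e' → ∀ v, v ∈ e → v ∉ e'

/-- ν(G): maximum cardinality of a matching. -/
noncomputable def matchNum (G : SimpleGraph V) : ℕ :=
  sSup {k | ∃ R : Finset (Sym2 V), IsMatchingF G R ∧ R.card = k}

/-- An independent set of a static graph. -/
def IsIndepF (G : SimpleGraph V) (S : Finset V) : Prop :=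
  ∀ u ∈ S, ∀ v ∈ S, ¬ G.Adj u v

/-- α(G): maximum cardinality of an independent set. -/
noncomputable def indepNum (G : SimpleGraph V) : ℕ :=
  sSup {k | ∃ S : Finset V, IsIndepF G S ∧ S.card = k}

/-- The Δ-temporal line graph: vertices are the time edges, two distinct time edges are
adjacent iff the edges share a vertex and the labels are less than Δ apart. -/
def tline (lab : Sym2 V → Finset ℕ) (Δ : ℕ) :
    SimpleGraph {p : Sym2 V × ℕ // IsTimeEdge lab p} where
  Adj p q := p ≠ q ∧ (∃ v, v ∈ p.1.1 ∧ v ∈ q.1.1) ∧ ((p.1.2 : ℤ) - (q.1.2 : ℤ)).natAbs < Δ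
  symm := by
    constructor
    rintro p q ⟨hne, ⟨v, hv1, hv2⟩, hlt⟩
    exact ⟨hne.symm, ⟨v, hv2, hv1⟩, by omega⟩
  loopless := by constructor; rintro p ⟨hne, -⟩; exact hne rfl

/-- A family `Fam` of Δ-temporal matchings of `𝒢|_{[Δ(ℓ-1)+1, Δℓ]}` is ℓ-complete if
for every Δ-temporal matching `M` of 𝒢 there is an `M' ∈ Fam` such that
`(M \ M|_{[Δ(ℓ-1)+1, Δℓ]}) ∪ M'` is a Δ-temporal matching of 𝒢 of size at least `|M|`. -/
def LComplete {V : Type*} [DecidableEq V] (lab : Sym2 V → Finset ℕ) (Δ l : ℕ)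
    (Fam : Finset (Finset (Sym2 V × ℕ))) : Prop :=
  (∀ M' ∈ Fam, IsTM (trestrict lab (Finset.Icc (Δ * (l - 1) + 1) (Δ * l))) Δ M') ∧
  ∀ M : Finset (Sym2 V × ℕ), IsTM lab Δ M →
    ∃ M' ∈ Fam,
      IsTM lab Δ
        (M.filter (fun p => p.2 ∉ Finset.Icc (Δ * (l - 1) + 1) (Δ * l)) ∪ M') ∧
      M.card ≤
        (M.filter (fun p => p.2 ∉ Finset.Icc (Δ * (l - 1) + 1) (Δ * l)) ∪ M').card

/-!
Call a window matching `M'` (a Δ-temporal matching with labels in the window `W`) a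
replacement for a Δ-temporal matching `M` of 𝒢 if swapping `M|_W` for `M'` leaves a Δ-temporal
matching at least as large. Take an inclusion-minimal family of window matchings containing a
replacement for every `M`: each member `x` then has a witness `M_x` for which `x` is the only
replacement in the family.

Being a replacement is a disjointness condition. To `x` attach the (vertex, time) slots it
occupies and the tokens `|x|, …, ν - 1`; to `M` attach the slots of `W` blocked by the time edges
of `M` outside `W` and the tokens `0, …, |M|_W| - 1`. Every window matching has at most `ν`
edges, so the first set has at most `3ν` elements. Only edges of `M` in the `Δ - 1` slots on
either side of `W` block anything, each such strip carries at most `ν` of them, and each blocks at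
most `2(Δ - 1)` slots; so the second set has at most `4ν(Δ - 1) + ν ≤ 5ν(Δ - 1)` elements when
`Δ ≥ 2`. Bollobás's set-pair inequality, applied to the pairs `(x, M_x)`, bounds the family by
`C(5ν + 5ν(Δ - 1), 5ν)`. For `Δ = 1` nothing is blocked and one maximum window matching suffices.
-/

open Finset

theorem Finset.disjoint_disjSum_disjSum_iff {α β : Type*} {s₁ s₂ : Finset α}
    {t₁ t₂ : Finset β} :
    Disjoint (s₁.disjSum t₁) (s₂.disjSum t₂) ↔ Disjoint s₁ s₂ ∧ Disjoint t₁ t₂ := by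
  simp [disjoint_left, Sum.forall]

theorem Finset.disjoint_Ico_range_iff {k m n : ℕ} (hmn : m ≤ n) :
    Disjoint (Ico k n) (range m) ↔ m ≤ k := by
  refine ⟨fun h => ?_, fun h => disjoint_left.2 fun x hx hx' => ?_⟩
  · by_contra! hkm
    exact disjoint_left.1 h (mem_Ico.2 ⟨le_rfl, by omega⟩) (mem_range.2 hkm)
  · rw [mem_Ico] at hx
    rw [mem_range] at hx'
    omega

theorem Nat.add_choose_le_add_choose {a b p q : ℕ} (ha : a ≤ p) (hb : b ≤ q) :
    (a + b).choose a ≤ (p + q).choose p :=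
  calc (a + b).choose a = (a + b).choose b := Nat.choose_symm_add
    _ ≤ (p + b).choose b := Nat.choose_le_choose b (by omega)
    _ = (p + b).choose p := Nat.choose_symm_add.symm
    _ ≤ (p + q).choose p := Nat.choose_le_choose p (by omega)

theorem Nat.succ_mul_inv_add_choose (a b : ℕ) :
    ((b + 1 : ℕ) : ℚ) * ((a + b).choose a : ℚ)⁻¹ =
      ((a + (b + 1) : ℕ) : ℚ) * ((a + (b + 1)).choose a : ℚ)⁻¹ := by
  have key := Nat.add_one_mul_choose_eq (a + b) b
  rw [← Nat.choose_symm_add, show a + b + 1 = a + (b + 1) by ring, ← Nat.choose_symm_add] at key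
  have h₁ : ((a + b).choose a : ℚ) ≠ 0 := Nat.cast_ne_zero.2 (Nat.choose_pos (by omega)).ne'
  have h₂ : ((a + (b + 1)).choose a : ℚ) ≠ 0 :=
    Nat.cast_ne_zero.2 (Nat.choose_pos (by omega)).ne'
  field_simp
  exact_mod_cast (by linarith)

section SetPairs

variable {ι α : Type*} [DecidableEq α]

theorem sum_inv_choose_card_erase {X A B : Finset α} (hA : A ⊆ X) (hB : B ⊆ X)
    (hAB : Disjoint A B) (hBne : B.Nonempty) :
    ∑ x ∈ X with x ∉ A, ((#A + #(B.erase x)).choose #A : ℚ)⁻¹ =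
      #X * ((#A + #B).choose #A : ℚ)⁻¹ := by
  obtain ⟨b, hb⟩ : ∃ b, #B = b + 1 := Nat.exists_eq_add_one_of_ne_zero hBne.card_pos.ne'
  have hinB : {x ∈ X | x ∉ A ∧ x ∈ B} = B := by
    ext x
    have := hAB
    grind [disjoint_left]
  have hrest : #{x ∈ X | x ∉ A ∧ x ∉ B} + #A + #B = #X := by
    rw [show {x ∈ X | x ∉ A ∧ x ∉ B} = X \ (A ∪ B) by ext; simp, add_assoc,
      ← card_union_of_disjoint hAB, card_sdiff_add_card_eq_card (union_subset hA hB)]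
  have hsumB : ∑ x ∈ B, ((#A + #(B.erase x)).choose #A : ℚ)⁻¹ =
      (b + 1 : ℕ) * ((#A + b).choose #A : ℚ)⁻¹ := by
    rw [← hb, ← nsmul_eq_mul, ← sum_const]
    exact sum_congr rfl fun x hx => by rw [card_erase_of_mem hx, hb, Nat.add_sub_cancel]
  have hsumRest : ∑ x ∈ X with x ∉ A ∧ x ∉ B, ((#A + #(B.erase x)).choose #A : ℚ)⁻¹ =
      #{x ∈ X | x ∉ A ∧ x ∉ B} * ((#A + #B).choose #A : ℚ)⁻¹ := by
    rw [← nsmul_eq_mul, ← sum_const]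
    exact sum_congr rfl fun x hx => by rw [erase_eq_of_notMem (mem_filter.1 hx).2.2]
  rw [← sum_filter_add_sum_filter_not _ (· ∈ B), filter_filter, filter_filter, hinB, hsumB,
    hsumRest, Nat.succ_mul_inv_add_choose, ← hrest, hb]
  push_cast
  ring

/- Bollobás's inequality. For `x ∈ X`, the pairs `(A i, B i \ {x})` with `x ∉ A i` form a smaller
cross-intersecting system; averaging the induction hypothesis over `x` recovers every weight
exactly (`sum_inv_choose_card_erase`), unless some `B i` is empty, when `s = {i}`. -/
theorem sum_inv_choose_le_one_of_crossIntersecting (X : Finset α) (s : Finset ι)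
    (A B : ι → Finset α) (hX : ∀ i ∈ s, A i ∪ B i ⊆ X) (hAB : ∀ i ∈ s, Disjoint (A i) (B i))
    (hcross : ∀ i ∈ s, ∀ j ∈ s, i ≠ j → ¬ Disjoint (A i) (B j)) :
    ∑ i ∈ s, ((#(A i) + #(B i)).choose #(A i) : ℚ)⁻¹ ≤ 1 := by
  induction X using Finset.strongInduction generalizing s B with
  | H X ih =>
  by_cases hBempty : ∃ i ∈ s, B i = ∅
  · obtain ⟨i, hi, hBi⟩ := hBempty
    have hs : s = {i} := eq_singleton_iff_unique_mem.2
      ⟨hi, fun j hj => by_contra fun hji => hcross j hj i hi hji (by simp [hBi])⟩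
    simp [hs, hBi]
  push Not at hBempty
  rcases s.eq_empty_or_nonempty with rfl | ⟨i₀, hi₀⟩
  · simp
  have hXpos : (0 : ℚ) < #X := by
    have := (hBempty i₀ hi₀).mono (subset_union_right.trans (hX i₀ hi₀))
    exact_mod_cast this.card_pos
  refine le_of_mul_le_mul_left ?_ hXpos
  calc (#X : ℚ) * ∑ i ∈ s, ((#(A i) + #(B i)).choose #(A i) : ℚ)⁻¹
      = ∑ i ∈ s, ∑ x ∈ X with x ∉ A i,
          ((#(A i) + #((B i).erase x)).choose #(A i) : ℚ)⁻¹ := by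
        rw [mul_sum]
        refine sum_congr rfl fun i hi => (sum_inv_choose_card_erase ?_ ?_ (hAB i hi) ?_).symm
        · exact subset_union_left.trans (hX i hi)
        · exact subset_union_right.trans (hX i hi)
        · exact hBempty i hi
    _ = ∑ x ∈ X, ∑ i ∈ s with x ∉ A i,
          ((#(A i) + #((B i).erase x)).choose #(A i) : ℚ)⁻¹ :=
        sum_comm' fun i x => by simp only [mem_filter]; tauto
    _ ≤ ∑ _x ∈ X, 1 := by
        refine sum_le_sum fun x hx =>
          ih (X.erase x) (erase_ssubset hx) _ (fun i => (B i).erase x) ?_ ?_ ?_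
        · intro i hi y hy
          obtain ⟨hi, hxA⟩ := mem_filter.1 hi
          rcases mem_union.1 hy with hyA | hyB
          · exact mem_erase.2 ⟨ne_of_mem_of_not_mem hyA hxA, hX i hi (mem_union_left _ hyA)⟩
          · exact erase_subset_erase x (subset_union_right.trans (hX i hi)) hyB
        · intro i hi
          exact (hAB i (mem_filter.1 hi).1).mono_right (erase_subset _ _)
        · intro i hi j hj hij hdisj
          obtain ⟨hi, hxA⟩ := mem_filter.1 hi
          obtain ⟨y, hyA, hyB⟩ := not_disjoint_iff.1 (hcross i hi j (mem_filter.1 hj).1 hij)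
          exact disjoint_left.1 hdisj hyA (mem_erase.2 ⟨ne_of_mem_of_not_mem hyA hxA, hyB⟩)
    _ = #X * 1 := by simp

theorem card_le_choose_of_crossIntersecting (s : Finset ι) (A B : ι → Finset α) {p q : ℕ}
    (hA : ∀ i ∈ s, #(A i) ≤ p) (hB : ∀ i ∈ s, #(B i) ≤ q)
    (hAB : ∀ i ∈ s, Disjoint (A i) (B i))
    (hcross : ∀ i ∈ s, ∀ j ∈ s, i ≠ j → ¬ Disjoint (A i) (B j)) :
    #s ≤ (p + q).choose p := by
  have hpos : (0 : ℚ) < (p + q).choose p := by exact_mod_cast Nat.choose_pos (by omega)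
  have hsum : (#s : ℚ) * ((p + q).choose p : ℚ)⁻¹ ≤ 1 :=
    calc (#s : ℚ) * ((p + q).choose p : ℚ)⁻¹ = ∑ _i ∈ s, ((p + q).choose p : ℚ)⁻¹ := by simp
      _ ≤ ∑ i ∈ s, ((#(A i) + #(B i)).choose #(A i) : ℚ)⁻¹ := by
        refine sum_le_sum fun i hi => inv_anti₀ (by exact_mod_cast Nat.choose_pos (by omega)) ?_
        exact_mod_cast Nat.add_choose_le_add_choose (hA i hi) (hB i hi)
      _ ≤ 1 := sum_inv_choose_le_one_of_crossIntersecting (s.biUnion fun i => A i ∪ B i) s A B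
        (fun i hi => subset_biUnion_of_mem (fun i => A i ∪ B i) hi) hAB hcross
  exact_mod_cast (mul_inv_le_iff₀ hpos).1 hsum |>.trans_eq (one_mul _)

theorem exists_subfamily_card_le_choose_of_disjoint_iff {β γ : Type*} [DecidableEq β]
    (F₀ : Finset β) (P : γ → Prop) (R : γ → β → Prop) (A : β → Finset α) (B : γ → Finset α)
    {p q : ℕ} (hR : ∀ m, P m → ∀ x ∈ F₀, R m x ↔ Disjoint (A x) (B m))
    (hF₀ : ∀ m, P m → ∃ x ∈ F₀, R m x)
    (hA : ∀ x ∈ F₀, #(A x) ≤ p) (hB : ∀ m, P m → #(B m) ≤ q) :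
    ∃ F ⊆ F₀, (∀ m, P m → ∃ x ∈ F, R m x) ∧ #F ≤ (p + q).choose p := by
  obtain ⟨F, hFsub, hFmin⟩ :=
    exists_minimal_le_of_wellFoundedLT (fun F => ∀ m, P m → ∃ x ∈ F, R m x) F₀ hF₀
  refine ⟨F, hFsub, hFmin.1, ?_⟩
  rcases isEmpty_or_nonempty γ with hγ | hγ
  · have : ∅ = F := hFmin.eq_of_le (fun m => isEmptyElim m) (empty_subset F)
    simp [← this]
  have hwitness : ∀ x ∈ F, ∃ m, P m ∧ R m x ∧ ∀ y ∈ F, y ≠ x → ¬ R m y := by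
    intro x hx
    have hnot : ¬ ∀ m, P m → ∃ y ∈ F.erase x, R m y := fun h =>
      notMem_erase x F (hFmin.2 h (erase_subset x F) hx)
    push Not at hnot
    obtain ⟨m, hm, hnone⟩ := hnot
    obtain ⟨y, hy, hRy⟩ := hFmin.1 m hm
    have hyx : y = x := by_contra fun hyx => hnone y (mem_erase.2 ⟨hyx, hy⟩) hRy
    exact ⟨m, hm, hyx ▸ hRy, fun y hy hyx => hnone y (mem_erase.2 ⟨hyx, hy⟩)⟩
  choose! w hwP hwR hwOnly using hwitness
  refine card_le_choose_of_crossIntersecting F A (B ∘ w) (fun x hx => hA x (hFsub hx))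
    (fun x hx => hB _ (hwP x hx)) (fun x hx => (hR _ (hwP x hx) x (hFsub hx)).1 (hwR x hx)) ?_
  intro x hx y hy hxy
  rw [Function.comp_apply, ← hR _ (hwP y hy) x (hFsub hx)]
  exact hwOnly y hy x hx hxy

end SetPairs

section TemporalMatchings

variable {lab : Sym2 V → Finset ℕ} {Δ : ℕ} {M N : Finset (Sym2 V × ℕ)}

theorem DIndep.symm {p q : Sym2 V × ℕ} (h : DIndep Δ p q) : DIndep Δ q p := by
  rcases h with h | h
  · exact Or.inl fun v hq hp => h v hp hq
  · exact Or.inr (by omega)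

theorem IsTM.subset (hM : IsTM lab Δ M) (hNM : N ⊆ M) : IsTM lab Δ N :=
  ⟨fun p hp => hM.1 p (hNM hp), fun p hp q hq => hM.2 p (hNM hp) q (hNM hq)⟩

theorem IsTM.union [DecidableEq V] (hM : IsTM lab Δ M) (hN : IsTM lab Δ N)
    (hMN : ∀ p ∈ M, ∀ q ∈ N, DIndep Δ p q) : IsTM lab Δ (M ∪ N) := by
  refine ⟨fun p hp => (mem_union.1 hp).elim (hM.1 p) (hN.1 p), fun p hp q hq hpq => ?_⟩
  rcases mem_union.1 hp with hp | hp <;> rcases mem_union.1 hq with hq | hq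
  · exact hM.2 p hp q hq hpq
  · exact hMN p hp q hq
  · exact (hMN q hq p hp).symm
  · exact hN.2 p hp q hq hpq

theorem isTM_trestrict_iff {S : Finset ℕ} :
    IsTM (trestrict lab S) Δ M ↔ IsTM lab Δ M ∧ ∀ p ∈ M, p.2 ∈ S := by
  simp only [IsTM, IsTimeEdge, trestrict, mem_inter]
  grind

theorem IsTM.filter_mem_trestrict (hM : IsTM lab Δ M) (W : Finset ℕ) :
    IsTM (trestrict lab W) Δ {p ∈ M | p.2 ∈ W} :=
  isTM_trestrict_iff.2 ⟨hM.subset (filter_subset _ _), fun _ hp => (mem_filter.1 hp).2⟩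

theorem IsTM.card_le_matchNum_of_mem_Ico [Fintype V] [DecidableEq V] (hM : IsTM lab Δ M)
    (b : ℕ) (hb : ∀ p ∈ M, p.2 ∈ Ico b (b + Δ)) : #M ≤ matchNum (ugraph lab) := by
  have hdisj : ∀ p ∈ M, ∀ q ∈ M, p ≠ q → ∀ v ∈ p.1, v ∉ q.1 := by
    intro p hp q hq hpq
    refine (hM.2 p hp q hq hpq).resolve_right ?_
    have := mem_Ico.1 (hb p hp)
    have := mem_Ico.1 (hb q hq)
    omega
  have hinj : Set.InjOn Prod.fst (M : Set (Sym2 V × ℕ)) := by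
    intro p hp q hq hpq
    by_contra hne
    exact hdisj p hp q hq hne _ p.1.out_fst_mem (hpq ▸ p.1.out_fst_mem)
  have hmatching : IsMatchingF (ugraph lab) (M.image Prod.fst) := by
    refine ⟨?_, ?_⟩
    · simp only [mem_image]
      rintro _ ⟨⟨e, t⟩, hp, rfl⟩
      obtain ⟨hdiag, ht⟩ := hM.1 _ hp
      induction e using Sym2.ind with
      | _ x y => exact ⟨fun hxy => hdiag (Sym2.mk_isDiag_iff.2 hxy), t, ht⟩
    · simp only [mem_image]
      rintro _ ⟨p, hp, rfl⟩ _ ⟨q, hq, rfl⟩ hpq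
      exact hdisj p hp q hq (fun h => hpq (h ▸ rfl))
  rw [← card_image_of_injOn hinj]
  refine le_csSup ⟨Fintype.card (Sym2 V), ?_⟩ ⟨_, hmatching, rfl⟩
  rintro _ ⟨R, -, rfl⟩
  exact card_le_univ R

theorem exists_finset_mem_iff_isTM_trestrict [Fintype V] (lab : Sym2 V → Finset ℕ) (Δ : ℕ)
    (W : Finset ℕ) :
    ∃ F₀ : Finset (Finset (Sym2 V × ℕ)), ∀ M', M' ∈ F₀ ↔ IsTM (trestrict lab W) Δ M' := by
  classical
  refine ⟨{M' ∈ ((univ : Finset (Sym2 V)) ×ˢ W).powerset | IsTM (trestrict lab W) Δ M'},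
    fun M' => ?_⟩
  rw [mem_filter, mem_powerset, and_iff_right_iff_imp]
  exact fun h p hp => mem_product.2 ⟨mem_univ _, (isTM_trestrict_iff.1 h).2 p hp⟩

end TemporalMatchings

section Slots

variable [DecidableEq V] {Δ : ℕ}

def occupiedSlots (M : Finset (Sym2 V × ℕ)) : Finset (V × ℕ) :=
  M.biUnion fun p => p.1.toFinset ×ˢ {p.2}

def nearSlots (W : Finset ℕ) (Δ t : ℕ) : Finset ℕ :=
  {s ∈ W | ((s : ℤ) - t).natAbs < Δ}

def blockedSlots (W : Finset ℕ) (Δ : ℕ) (N : Finset (Sym2 V × ℕ)) : Finset (V × ℕ) :=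
  N.biUnion fun q => q.1.toFinset ×ˢ nearSlots W Δ q.2

theorem mem_occupiedSlots {M : Finset (Sym2 V × ℕ)} {v : V} {t : ℕ} :
    (v, t) ∈ occupiedSlots M ↔ ∃ e, (e, t) ∈ M ∧ v ∈ e := by
  simp [occupiedSlots, Sym2.mem_toFinset]

theorem mem_blockedSlots {W : Finset ℕ} {N : Finset (Sym2 V × ℕ)} {v : V} {t : ℕ} :
    (v, t) ∈ blockedSlots W Δ N ↔ ∃ q ∈ N, v ∈ q.1 ∧ t ∈ W ∧ ((t : ℤ) - q.2).natAbs < Δ := by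
  simp [blockedSlots, nearSlots, Sym2.mem_toFinset]

theorem Sym2.card_toFinset_le_two (e : Sym2 V) : #e.toFinset ≤ 2 := by
  rw [Sym2.card_toFinset]
  split_ifs <;> norm_num

theorem card_occupiedSlots_le (M : Finset (Sym2 V × ℕ)) : #(occupiedSlots M) ≤ 2 * #M :=
  calc #(occupiedSlots M) ≤ ∑ p ∈ M, #(p.1.toFinset ×ˢ {p.2}) := card_biUnion_le
    _ ≤ ∑ _p ∈ M, 2 := sum_le_sum fun p _ => by
        rw [card_product, card_singleton, mul_one]
        exact p.1.card_toFinset_le_two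
    _ = 2 * #M := by rw [sum_const, smul_eq_mul, mul_comm]

theorem disjoint_occupiedSlots_blockedSlots_iff {W : Finset ℕ} {M N : Finset (Sym2 V × ℕ)}
    (hM : ∀ p ∈ M, p.2 ∈ W) :
    Disjoint (occupiedSlots M) (blockedSlots W Δ N) ↔ ∀ p ∈ M, ∀ q ∈ N, DIndep Δ p q := by
  constructor
  · intro h p hp q hq
    by_contra hpq
    simp only [DIndep, not_or, not_forall, not_not, not_le, exists_prop] at hpq
    obtain ⟨⟨v, hvp, hvq⟩, hclose⟩ := hpq
    exact disjoint_left.1 h (mem_occupiedSlots.2 ⟨p.1, hp, hvp⟩)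
      (mem_blockedSlots.2 ⟨q, hq, hvq, hM p hp, hclose⟩)
  · refine fun h => disjoint_left.2 fun ⟨v, t⟩ hocc hblocked => ?_
    obtain ⟨e, he, hve⟩ := mem_occupiedSlots.1 hocc
    obtain ⟨q, hq, hvq, -, hclose⟩ := mem_blockedSlots.1 hblocked
    rcases h (e, t) he q hq with hdisj | hfar
    · exact hdisj v hve hvq
    · exact (hfar.trans_lt hclose).false

theorem card_nearSlots_le {a t : ℕ} (ht : t ∉ Icc (a + 1) (a + Δ)) :
    #(nearSlots (Icc (a + 1) (a + Δ)) Δ t) ≤ Δ - 1 := by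
  rw [mem_Icc] at ht
  rcases le_or_gt t a with hta | hta
  · calc #(nearSlots (Icc (a + 1) (a + Δ)) Δ t) ≤ #(Icc (a + 1) (t + Δ - 1)) :=
          card_le_card fun s hs => by simp only [nearSlots, mem_filter, mem_Icc] at hs ⊢; omega
      _ ≤ Δ - 1 := by rw [Nat.card_Icc]; omega
  · calc #(nearSlots (Icc (a + 1) (a + Δ)) Δ t) ≤ #(Icc (t + 1 - Δ) (a + Δ)) :=
          card_le_card fun s hs => by simp only [nearSlots, mem_filter, mem_Icc] at hs ⊢; omega
      _ ≤ Δ - 1 := by rw [Nat.card_Icc]; omega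

theorem mem_Ico_of_nearSlots_nonempty {a t : ℕ} (ht : t ∉ Icc (a + 1) (a + Δ))
    (hnear : (nearSlots (Icc (a + 1) (a + Δ)) Δ t).Nonempty) :
    t ∈ Ico (a + 1 - Δ) (a + 1 - Δ + Δ) ∨ t ∈ Ico (a + Δ + 1) (a + Δ + 1 + Δ) := by
  obtain ⟨s, hs⟩ := hnear
  simp only [nearSlots, mem_filter, mem_Icc, mem_Ico] at hs ht ⊢
  omega

theorem card_blockedSlots_le [Fintype V] {lab : Sym2 V → Finset ℕ} {M : Finset (Sym2 V × ℕ)}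
    (hM : IsTM lab Δ M) (a : ℕ) :
    #(blockedSlots (Icc (a + 1) (a + Δ)) Δ {p ∈ M | p.2 ∉ Icc (a + 1) (a + Δ)}) ≤
      4 * matchNum (ugraph lab) * (Δ - 1) := by
  set W := Icc (a + 1) (a + Δ)
  set ν := matchNum (ugraph lab)
  set Mout := {p ∈ M | p.2 ∉ W}
  set Mnear := {p ∈ Mout | (nearSlots W Δ p.2).Nonempty}
  have hstrip : ∀ b, #{p ∈ M | p.2 ∈ Ico b (b + Δ)} ≤ ν := fun b =>
    (hM.subset (filter_subset _ _)).card_le_matchNum_of_mem_Ico b fun p hp => (mem_filter.1 hp).2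
  have hnear : #Mnear ≤ 2 * ν := by
    have hsub : Mnear ⊆ {p ∈ M | p.2 ∈ Ico (a + 1 - Δ) (a + 1 - Δ + Δ)} ∪
        {p ∈ M | p.2 ∈ Ico (a + Δ + 1) (a + Δ + 1 + Δ)} := by
      intro p hp
      simp only [Mnear, Mout, mem_filter] at hp
      rcases mem_Ico_of_nearSlots_nonempty hp.1.2 hp.2 with h | h
      · exact mem_union_left _ (mem_filter.2 ⟨hp.1.1, h⟩)
      · exact mem_union_right _ (mem_filter.2 ⟨hp.1.1, h⟩)
    calc #Mnear ≤ _ := card_le_card hsub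
      _ ≤ _ := card_union_le _ _
      _ ≤ 2 * ν := by linarith [hstrip (a + 1 - Δ), hstrip (a + Δ + 1)]
  calc #(blockedSlots W Δ Mout) ≤ ∑ q ∈ Mout, #(q.1.toFinset ×ˢ nearSlots W Δ q.2) :=
        card_biUnion_le
    _ ≤ ∑ q ∈ Mout, 2 * #(nearSlots W Δ q.2) := sum_le_sum fun q _ => by
        rw [card_product]
        exact Nat.mul_le_mul_right _ q.1.card_toFinset_le_two
    _ = ∑ q ∈ Mnear, 2 * #(nearSlots W Δ q.2) := by
        refine (sum_filter_of_ne fun q _ hq => ?_).symm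
        exact card_pos.1 (Nat.pos_of_ne_zero (right_ne_zero_of_mul hq))
    _ ≤ ∑ _q ∈ Mnear, 2 * (Δ - 1) := sum_le_sum fun q hq =>
        Nat.mul_le_mul_left 2 (card_nearSlots_le (mem_filter.1 (mem_filter.1 hq).1).2)
    _ = 2 * (Δ - 1) * #Mnear := by rw [sum_const, smul_eq_mul, mul_comm]
    _ ≤ 2 * (Δ - 1) * (2 * ν) := Nat.mul_le_mul_left _ hnear
    _ = 4 * ν * (Δ - 1) := by ring

end Slots

section Replacement

variable [DecidableEq V] {lab : Sym2 V → Finset ℕ} {Δ : ℕ}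
  {W : Finset ℕ} {M M' : Finset (Sym2 V × ℕ)}

def Replaces (lab : Sym2 V → Finset ℕ) (Δ : ℕ) (W : Finset ℕ) (M M' : Finset (Sym2 V × ℕ)) :
    Prop :=
  IsTM lab Δ ({p ∈ M | p.2 ∉ W} ∪ M') ∧ #M ≤ #({p ∈ M | p.2 ∉ W} ∪ M')

theorem replaces_filter_mem (hM : IsTM lab Δ M) : Replaces lab Δ W M {p ∈ M | p.2 ∈ W} := by
  rw [Replaces, union_comm, filter_union_filter_not_eq]
  exact ⟨hM, le_rfl⟩

theorem replaces_iff (hM : IsTM lab Δ M) (hM' : IsTM (trestrict lab W) Δ M') :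
    Replaces lab Δ W M M' ↔
      (∀ p ∈ M', ∀ q ∈ {p ∈ M | p.2 ∉ W}, DIndep Δ p q) ∧ #{p ∈ M | p.2 ∈ W} ≤ #M' := by
  obtain ⟨hM'TM, hM'W⟩ := isTM_trestrict_iff.1 hM'
  have hdisj : Disjoint {p ∈ M | p.2 ∉ W} M' :=
    disjoint_left.2 fun p hp hp' => (mem_filter.1 hp).2 (hM'W p hp')
  have hcard := card_filter_add_card_filter_not (s := M) (p := fun p => p.2 ∈ W)
  rw [Replaces, card_union_of_disjoint hdisj, ← hcard, add_comm, Nat.add_le_add_iff_left]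
  refine and_congr_left fun _ => ⟨fun h p hp q hq => ?_, fun h => ?_⟩
  · exact h.2 p (mem_union_right _ hp) q (mem_union_left _ hq)
      fun hpq => disjoint_left.1 hdisj (hpq ▸ hq) hp
  · exact (hM.subset (filter_subset _ _)).union hM'TM fun q hq p hp => (h p hp q hq).symm

theorem exists_complete_family_of_eq_one [Fintype V] (lab : Sym2 V → Finset ℕ)
    (W : Finset ℕ) :
    ∃ F : Finset (Finset (Sym2 V × ℕ)), (∀ M' ∈ F, IsTM (trestrict lab W) 1 M') ∧
      (∀ M, IsTM lab 1 M → ∃ M' ∈ F, Replaces lab 1 W M M') ∧ #F ≤ 1 := by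
  obtain ⟨F₀, hF₀⟩ := exists_finset_mem_iff_isTM_trestrict lab 1 W
  obtain ⟨M₁, hM₁, hmax⟩ := exists_max_image F₀ card ⟨∅, (hF₀ ∅).2 ⟨by simp, by simp⟩⟩
  have hM₁TM := (hF₀ M₁).1 hM₁
  refine ⟨{M₁}, by simpa using hM₁TM, fun M hM => ⟨M₁, mem_singleton_self _, ?_⟩,
    (card_singleton _).le⟩
  rw [replaces_iff hM hM₁TM]
  refine ⟨fun p hp q hq => Or.inr ?_, hmax _ ((hF₀ _).2 (hM.filter_mem_trestrict W))⟩
  have hpq : p.2 ≠ q.2 := fun h =>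
    (mem_filter.1 hq).2 (h ▸ (isTM_trestrict_iff.1 hM₁TM).2 p hp)
  omega

theorem exists_complete_family_of_two_le [Fintype V] (lab : Sym2 V → Finset ℕ) (hΔ : 2 ≤ Δ)
    (a : ℕ) :
    ∃ F : Finset (Finset (Sym2 V × ℕ)),
      (∀ M' ∈ F, IsTM (trestrict lab (Icc (a + 1) (a + Δ))) Δ M') ∧
      (∀ M, IsTM lab Δ M → ∃ M' ∈ F, Replaces lab Δ (Icc (a + 1) (a + Δ)) M M') ∧
      #F ≤ (5 * matchNum (ugraph lab) * Δ).choose (5 * matchNum (ugraph lab)) := by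
  set W := Icc (a + 1) (a + Δ)
  set ν := matchNum (ugraph lab)
  obtain ⟨F₀, hF₀⟩ := exists_finset_mem_iff_isTM_trestrict lab Δ W
  have hν : ∀ M', IsTM (trestrict lab W) Δ M' → #M' ≤ ν := fun M' h =>
    (isTM_trestrict_iff.1 h).1.card_le_matchNum_of_mem_Ico (a + 1) fun p hp => by
      have := mem_Icc.1 ((isTM_trestrict_iff.1 h).2 p hp)
      exact mem_Ico.2 (by omega)
  obtain ⟨F, hFsub, hFcomplete, hFcard⟩ := exists_subfamily_card_le_choose_of_disjoint_iff F₀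
    (IsTM lab Δ) (Replaces lab Δ W)
    (fun M' => (occupiedSlots M').disjSum (Ico #M' ν))
    (fun M => (blockedSlots W Δ {p ∈ M | p.2 ∉ W}).disjSum (range #{p ∈ M | p.2 ∈ W}))
    (p := 5 * ν) (q := 5 * ν * (Δ - 1))
    (fun M hM M' hM' => by
      rw [replaces_iff hM ((hF₀ M').1 hM'), disjoint_disjSum_disjSum_iff,
        disjoint_occupiedSlots_blockedSlots_iff ((isTM_trestrict_iff.1 ((hF₀ M').1 hM')).2),
        disjoint_Ico_range_iff (hν _ (hM.filter_mem_trestrict W))])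
    (fun M hM => ⟨_, (hF₀ _).2 (hM.filter_mem_trestrict W), replaces_filter_mem hM⟩)
    (fun M' hM' => by
      have := hν M' ((hF₀ M').1 hM')
      have := card_occupiedSlots_le M'
      rw [card_disjSum, Nat.card_Ico]
      omega)
    (fun M hM => by
      have := card_blockedSlots_le hM a
      have := hν _ (hM.filter_mem_trestrict W)
      have : ν ≤ ν * (Δ - 1) := Nat.le_mul_of_pos_right ν (by omega)
      rw [card_disjSum, card_range]
      linarith)
  refine ⟨F, fun M' hM' => (hF₀ M').1 (hFsub hM'), hFcomplete, hFcard.trans_eq ?_⟩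
  rw [add_comm, ← Nat.mul_succ, Nat.succ_eq_add_one, Nat.sub_add_cancel (by omega)]

end Replacement

theorem stmt17_general {V : Type*} [Fintype V] [DecidableEq V]
    (lab : Sym2 V → Finset ℕ) (Δ l : ℕ)
    (hΔ : 1 ≤ Δ) (hl : 1 ≤ l) :
    ∃ Fam : Finset (Finset (Sym2 V × ℕ)),
      LComplete lab Δ l Fam ∧
      Fam.card ≤
        Nat.choose (5 * matchNum (ugraph lab) * Δ) (5 * matchNum (ugraph lab)) := by
  obtain ⟨k, rfl⟩ : ∃ k, l = k + 1 := ⟨l - 1, by omega⟩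
  simp only [LComplete, Nat.add_sub_cancel, mul_add_one]
  rcases hΔ.eq_or_lt with rfl | hΔ
  · obtain ⟨F, hF, hFcomplete, hFcard⟩ :=
      exists_complete_family_of_eq_one lab (Icc (1 * k + 1) (1 * k + 1))
    exact ⟨F, ⟨hF, hFcomplete⟩, by simpa using hFcard⟩
  · obtain ⟨F, hF, hFcomplete, hFcard⟩ := exists_complete_family_of_two_le lab hΔ (Δ * k)
    exact ⟨F, ⟨hF, hFcomplete⟩, hFcard⟩

/-- For a temporal graph 𝒢 of lifetime `T` with `ℓΔ ≤ T`, there exists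
an ℓ-complete family of Δ-temporal matchings of `𝒢|_{[Δ(ℓ-1)+1, Δℓ]}` of size at most
`C(5νΔ, 5ν)`, where `ν = ν(G)` is the maximum matching size of the underlying graph. -/
theorem stmt17 {V : Type*} [Fintype V] [DecidableEq V]
    (lab : Sym2 V → Finset ℕ) (T Δ l : ℕ) (hT : HasLifetime lab T)
    (hΔ : 1 ≤ Δ) (hl : 1 ≤ l) (hle : l * Δ ≤ T) :
    ∃ Fam : Finset (Finset (Sym2 V × ℕ)),
      LComplete lab Δ l Fam ∧
      Fam.card ≤
        Nat.choose (5 * matchNum (ugraph lab) * Δ) (5 * matchNum (ugraph lab)) :=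
  stmt17_general lab Δ l hΔ hl
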